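/- Let G be a finite group and x, y distinct elements of the same order. Then the following are equivalent: (a) x is a power of y or y is a power of x; (b) ⟨x⟩ = ⟨y⟩; (c) x and y have the same closed neighbourhood in the power graph P(G). -/

import Mathlib

/-- The power graph of a group: distinct `x, y` are adjacent iff one is a
positive power of the other. -/
def powerGraph (G : Type*) [Group G] : SimpleGraph G :=
  SimpleGraph.fromRel (fun x y => ∃ m : ℕ, 0 < m ∧ x = y ^ m)

/-- The closed neighbourhood of a vertex in the power graph. -/
def closedNbhd {G : Type*} [Group G] (x : G) : Set G :=
  insert x ((powerGraph G).neighborSet x)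

/-!
In a finite group, `z` is a positive power of `y` exactly when `⟨z⟩ ≤ ⟨y⟩`. Hence the closed
neighbourhood of `x` in the power graph is the set of `z` with `⟨z⟩` comparable to `⟨x⟩`, which
depends only on `⟨x⟩`; and two cyclic subgroups of the same order are comparable only if equal.
-/

open Subgroup

section

variable {G : Type*} [Group G] [Finite G]

lemma exists_pos_pow_eq_iff_mem_zpowers {y z : G} :
    (∃ m : ℕ, 0 < m ∧ z = y ^ m) ↔ z ∈ zpowers y := by
  refine ⟨fun ⟨m, _, hm⟩ => hm ▸ pow_mem (mem_zpowers y) m, fun hz => ?_⟩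
  obtain ⟨n, rfl⟩ := mem_powers_iff_mem_zpowers.mpr hz
  rcases Nat.eq_zero_or_pos n with rfl | hn
  · exact ⟨orderOf y, orderOf_pos y, by simp⟩
  · exact ⟨n, hn, rfl⟩

lemma zpowers_le_or_le_iff_eq {x y : G} (hord : orderOf x = orderOf y) :
    zpowers x ≤ zpowers y ∨ zpowers y ≤ zpowers x ↔ zpowers x = zpowers y := by
  have hcard : Nat.card (zpowers x) = Nat.card (zpowers y) := by
    rw [Nat.card_zpowers, Nat.card_zpowers, hord]
  refine ⟨?_, fun h => Or.inl h.le⟩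
  rintro (h | h)
  · exact eq_of_le_of_card_ge h hcard.ge
  · exact (eq_of_le_of_card_ge h hcard.le).symm

lemma powerGraph_adj_iff {a b : G} :
    (powerGraph G).Adj a b ↔ a ≠ b ∧ (zpowers a ≤ zpowers b ∨ zpowers b ≤ zpowers a) := by
  simp only [powerGraph, SimpleGraph.fromRel_adj, exists_pos_pow_eq_iff_mem_zpowers, zpowers_le]

lemma mem_closedNbhd_iff {x z : G} :
    z ∈ closedNbhd x ↔ zpowers z ≤ zpowers x ∨ zpowers x ≤ zpowers z := by
  rw [closedNbhd, Set.mem_insert_iff, SimpleGraph.mem_neighborSet, powerGraph_adj_iff]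
  by_cases hzx : z = x
  · simp [hzx]
  · simp [hzx, Ne.symm hzx, or_comm]

end

theorem same_order_tfae_general {G : Type*} [Group G] [Finite G] (x y : G)
    (hord : orderOf x = orderOf y) :
    (((∃ m : ℕ, 0 < m ∧ x = y ^ m) ∨ (∃ m : ℕ, 0 < m ∧ y = x ^ m)) ↔
        Subgroup.zpowers x = Subgroup.zpowers y) ∧
      (Subgroup.zpowers x = Subgroup.zpowers y ↔ closedNbhd x = closedNbhd y) := by
  simp only [exists_pos_pow_eq_iff_mem_zpowers, ← zpowers_le]
  refine ⟨zpowers_le_or_le_iff_eq hord, fun h => ?_, fun h => ?_⟩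
  · ext z
    simp only [mem_closedNbhd_iff, h]
  · have hy : y ∈ closedNbhd x := h ▸ Set.mem_insert y _
    exact (zpowers_le_or_le_iff_eq hord).mp (mem_closedNbhd_iff.mp hy).symm

theorem same_order_tfae {G : Type*} [Group G] [Finite G] (x y : G)
    (hxy : x ≠ y) (hord : orderOf x = orderOf y) :
    (((∃ m : ℕ, 0 < m ∧ x = y ^ m) ∨ (∃ m : ℕ, 0 < m ∧ y = x ^ m)) ↔
        Subgroup.zpowers x = Subgroup.zpowers y) ∧
      (Subgroup.zpowers x = Subgroup.zpowers y ↔ closedNbhd x = closedNbhd y) :=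
  same_order_tfae_general x y hord
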